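/- Let A ∈ ℝ^{n×n} be invertible, W ∈ ℝ^{n×n} symmetric positive definite, S ∈ ℝ^{n×q} of full column rank, and X_k ∈ ℝ^{n×n}. Then X_{k+1} := X_k + W A^T S (S^T A W A^T S)^{-1} S^T (I − A X_k), which is the minimizer of ‖X − X_k‖_{F(W^{-1})} subject to S^T A X = S^T, is also a minimizer of ‖X − A^{-1}‖_{F(W^{-1})} over the affine set {X_k + W A^T S Y^T : Y ∈ ℝ^{n×q}}; i.e., for every Y ∈ ℝ^{n×q} one has ‖X_{k+1} − A^{-1}‖_{F(W^{-1})} ≤ ‖X_k + W A^T S Y^T − A^{-1}‖_{F(W^{-1})}. -/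

import Mathlib

open Matrix BigOperators

/-- Squared weighted Frobenius norm: `‖X‖_{F(W⁻¹)}² = Tr(Xᵀ W⁻¹ X W⁻¹)`. -/
noncomputable def wFNormSq {n : ℕ} (W X : Matrix (Fin n) (Fin n) ℝ) : ℝ :=
  (Xᵀ * W⁻¹ * X * W⁻¹).trace

/-- Weighted Frobenius norm `‖X‖_{F(W⁻¹)}`. -/
noncomputable def wFNorm {n : ℕ} (W X : Matrix (Fin n) (Fin n) ℝ) : ℝ :=
  Real.sqrt (wFNormSq W X)

/-!
Write `B = Aᵀ S` and `⟪U, V⟫ = Tr(Uᵀ W⁻¹ V W⁻¹)`, the inner product of the weighted Frobenius norm.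
The update `X₁` satisfies the sketched equation `Bᵀ X₁ = Sᵀ`, so the residual `X₁ - A⁻¹` lies in the
kernel of `Bᵀ`. Every point of the affine set is `X₁ + W B Z`, and `⟪V, W B Z⟫ = Tr((Bᵀ V)ᵀ Z W⁻¹)`,
so the residual is orthogonal to the direction of the affine set and Pythagoras gives the bound.
`Sᵀ A W Aᵀ S = Bᵀ W B` is invertible because `B` has full column rank.
-/

namespace Matrix

variable {m n : Type*} [Fintype n]

theorem mulVec_injective_of_rank_eq_card {K : Type*} [Field K] {B : Matrix m n K}
    (h : B.rank = Fintype.card n) : Function.Injective B.mulVec := by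
  rw [mulVec_injective_iff, linearIndependent_iff_card_eq_finrank_span, ← h,
    rank_eq_finrank_span_cols]
  rfl

open scoped MatrixOrder ComplexOrder in
theorem PosSemidef.trace_conjTranspose_mul_mul_mul_nonneg [Fintype m] [DecidableEq m]
    {𝕜 : Type*} [RCLike 𝕜] {P : Matrix m m 𝕜} (hP : P.PosSemidef) (X : Matrix m m 𝕜) :
    0 ≤ (Xᴴ * P * X * P).trace := by
  obtain ⟨B, rfl⟩ := CStarAlgebra.nonneg_iff_eq_star_mul_self.mp hP.nonneg
  have hC : (Xᴴ * (Bᴴ * B) * X * (Bᴴ * B)).trace =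
      ((B * X * Bᴴ)ᴴ * (B * X * Bᴴ)).trace := by
    rw [show Xᴴ * (Bᴴ * B) * X * (Bᴴ * B) = Xᴴ * Bᴴ * B * X * Bᴴ * B by
      simp only [Matrix.mul_assoc], trace_mul_comm]
    simp only [conjTranspose_mul, conjTranspose_conjTranspose, Matrix.mul_assoc]
  rw [star_eq_conjTranspose, hC]
  exact (posSemidef_conjTranspose_mul_self _).trace_nonneg

theorem transpose_mul_mul_update_eq_transpose {q : Type*} [Fintype q] [DecidableEq q]
    [DecidableEq n] {R : Type*} [CommRing R] (A X : Matrix n n R) (S K : Matrix n q R)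
    (hM : IsUnit (Sᵀ * A * K).det) :
    Sᵀ * A * (X + K * (Sᵀ * A * K)⁻¹ * Sᵀ * (1 - A * X)) = Sᵀ := by
  rw [Matrix.mul_add]
  simp only [← Matrix.mul_assoc]
  rw [mul_nonsing_inv _ hM, Matrix.one_mul, Matrix.mul_sub, Matrix.mul_one,
    Matrix.mul_assoc Sᵀ A X]
  abel

end Matrix

theorem wFNormSq_nonneg {n : ℕ} {W : Matrix (Fin n) (Fin n) ℝ} (hW : W.PosDef)
    (X : Matrix (Fin n) (Fin n) ℝ) : 0 ≤ wFNormSq W X := by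
  simpa [wFNormSq, conjTranspose_eq_transpose_of_trivial] using
    PosSemidef.trace_conjTranspose_mul_mul_mul_nonneg hW.inv.posSemidef X

theorem wFNormSq_add {n : ℕ} {W : Matrix (Fin n) (Fin n) ℝ} (hW : Wᵀ = W)
    (U V : Matrix (Fin n) (Fin n) ℝ) :
    wFNormSq W (U + V) = wFNormSq W U + 2 * (Uᵀ * W⁻¹ * V * W⁻¹).trace + wFNormSq W V := by
  have hcomm : (Vᵀ * W⁻¹ * U * W⁻¹).trace = (Uᵀ * W⁻¹ * V * W⁻¹).trace := by
    rw [← trace_transpose]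
    simp only [transpose_mul, transpose_transpose, transpose_nonsing_inv, hW, Matrix.mul_assoc]
    rw [trace_mul_comm]
    simp only [Matrix.mul_assoc]
  simp only [wFNormSq, transpose_add, Matrix.add_mul, Matrix.mul_add, trace_add, hcomm]
  ring

theorem wFNorm_le_wFNorm_add_mul {n q : ℕ} {W : Matrix (Fin n) (Fin n) ℝ} (hW : W.PosDef)
    {B : Matrix (Fin n) (Fin q) ℝ} {V : Matrix (Fin n) (Fin n) ℝ} (hBV : Bᵀ * V = 0)
    (Z : Matrix (Fin q) (Fin n) ℝ) :
    wFNorm W V ≤ wFNorm W (V + W * B * Z) := by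
  have hWt : Wᵀ = W := by simpa using hW.isHermitian.eq
  have hcross : Vᵀ * W⁻¹ * (W * B * Z) * W⁻¹ = (Bᵀ * V)ᵀ * Z * W⁻¹ := by
    rw [transpose_mul, transpose_transpose]
    simp only [Matrix.mul_assoc, nonsing_inv_mul_cancel_left _ _ hW.det_pos.ne'.isUnit]
  unfold wFNorm
  rw [wFNormSq_add hWt, hcross, hBV]
  simp only [transpose_zero, Matrix.zero_mul, trace_zero, mul_zero, add_zero]
  exact Real.sqrt_le_sqrt (le_add_of_nonneg_right (wFNormSq_nonneg hW _))

theorem stmt2 {n q : ℕ} (A W : Matrix (Fin n) (Fin n) ℝ)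
    (S : Matrix (Fin n) (Fin q) ℝ) (Xk : Matrix (Fin n) (Fin n) ℝ)
    (hA : IsUnit A.det) (hW : W.PosDef) (hS : S.rank = q) :
    ∀ Y : Matrix (Fin n) (Fin q) ℝ,
      wFNorm W ((Xk + W * Aᵀ * S * (Sᵀ * A * W * Aᵀ * S)⁻¹ * Sᵀ * (1 - A * Xk)) - A⁻¹) ≤
        wFNorm W ((Xk + W * Aᵀ * S * Yᵀ) - A⁻¹) := by
  intro Y
  have hAS : Function.Injective (Aᵀ * S).mulVec := by
    refine mulVec_injective_of_rank_eq_card ?_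
    rw [rank_mul_eq_right_of_isUnit_det _ _ (by rwa [det_transpose]), hS, Fintype.card_fin]
  have hM : IsUnit (Sᵀ * A * (W * Aᵀ * S)).det := by
    have := (hW.conjTranspose_mul_mul_same hAS).det_pos.ne'.isUnit
    simpa [conjTranspose_eq_transpose_of_trivial, Matrix.mul_assoc] using this
  set X₁ := Xk + W * Aᵀ * S * (Sᵀ * A * W * Aᵀ * S)⁻¹ * Sᵀ * (1 - A * Xk)
  have hX₁ : Sᵀ * A * X₁ = Sᵀ := by
    simpa only [X₁, Matrix.mul_assoc] using
      transpose_mul_mul_update_eq_transpose A Xk S (W * Aᵀ * S) hM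
  have hres : (Aᵀ * S)ᵀ * (X₁ - A⁻¹) = 0 := by
    rw [transpose_mul, transpose_transpose, Matrix.mul_sub, hX₁, Matrix.mul_assoc,
      mul_nonsing_inv _ hA, Matrix.mul_one, sub_self]
  have hsplit : Xk + W * Aᵀ * S * Yᵀ - A⁻¹ =
      (X₁ - A⁻¹) + W * (Aᵀ * S) * (Yᵀ - (Sᵀ * A * W * Aᵀ * S)⁻¹ * Sᵀ * (1 - A * Xk)) := by
    simp only [X₁, Matrix.mul_sub, Matrix.mul_assoc]
    abel
  rw [hsplit]
  exact wFNorm_le_wFNorm_add_mul hW hres _
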